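/- arXiv:2302.13220 — 4 statements merged into one kernel-verified Lean document; each statement's English description precedes it below -/
import Mathlib

section
/- Let n ≥ 1, let Λ be a real n×n matrix such that I − Λ is invertible, let Φ be a symmetric positive definite real n×n matrix, let i be a fixed index, and let α be a nonzero real number. Define Λ' by Λ'[p,i] = α⁻¹·Λ[p,i] for p ≠ i, Λ'[i,c] = α·Λ[i,c] for c ≠ i, Λ'[i,i] = Λ[i,i], and Λ'[j,k] = Λ[j,k] for all j,k ≠ i; define Φ' by Φ'[i,s] = Φ'[s,i] = α⁻¹·Φ[i,s] for s ≠ i, Φ'[i,i] = α⁻²·Φ[i,i], and Φ'[j,k] = Φ[j,k] for all j,k ≠ i. Then I − Λ' is invertible, and the implied covariance matrices Σ = (I − Λ)⁻ᵀ Φ (I − Λ)⁻¹ and Σ' = (I − Λ')⁻ᵀ Φ' (I − Λ')⁻¹ satisfy Σ'[j,k] = Σ[j,k] for all j, k ≠ i. -/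
/-!
Rescaling variable `i` by `α` is a change of coordinates by the diagonal matrix
`D = diag(1, …, α, …, 1)`: the new coefficients are `Λ' = D Λ D⁻¹` and, since `Φ` is symmetric,
the new error covariances are `Φ' = D⁻ᵀ Φ D⁻¹`. Hence `1 - Λ' = D (1 - Λ) D⁻¹` stays invertible
and `Σ' = D⁻ᵀ Σ D⁻¹`, which differs from `Σ` only in row and column `i`.
-/

open Matrix

variable {ι R : Type*} [DecidableEq ι]

section ImpliedCov

variable [Fintype ι] [CommRing R]

noncomputable def impliedCov (Λ Φ : Matrix ι ι R) : Matrix ι ι R :=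
  ((1 - Λ)⁻¹)ᵀ * Φ * (1 - Λ)⁻¹

variable {P Q : Matrix ι ι R}

theorem one_sub_conj_of_mul_eq_one (hPQ : P * Q = 1) (Λ : Matrix ι ι R) :
    1 - P * Λ * Q = P * (1 - Λ) * Q := by
  rw [Matrix.mul_sub, Matrix.sub_mul, Matrix.mul_one, hPQ]

theorem impliedCov_conj_of_mul_eq_one (hPQ : P * Q = 1) (Λ Φ : Matrix ι ι R) :
    impliedCov (P * Λ * Q) (Qᵀ * Φ * Q) = Qᵀ * impliedCov Λ Φ * Q := by
  have hQP : Q * P = 1 := mul_eq_one_comm.mp hPQ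
  have hPQt : Pᵀ * Qᵀ = 1 := by rw [← transpose_mul, hQP, transpose_one]
  have hinv : (1 - P * Λ * Q)⁻¹ = P * (1 - Λ)⁻¹ * Q := by
    rw [one_sub_conj_of_mul_eq_one hPQ, Matrix.mul_inv_rev, Matrix.mul_inv_rev,
      inv_eq_left_inv hPQ, inv_eq_right_inv hPQ, Matrix.mul_assoc]
  rw [impliedCov, impliedCov, hinv, transpose_mul, transpose_mul]
  simp only [← Matrix.mul_assoc]
  rw [Matrix.mul_assoc _ Pᵀ, hPQt, Matrix.mul_one, Matrix.mul_assoc _ Q P, hQP, Matrix.mul_one]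

end ImpliedCov

section Rescaling

variable [Semiring R]

def rescalingMatrix (i : ι) (a : R) : Matrix ι ι R :=
  diagonal (Pi.mulSingle i a)

theorem transpose_rescalingMatrix (i : ι) (a : R) :
    (rescalingMatrix i a)ᵀ = rescalingMatrix i a :=
  diagonal_transpose _

variable [Fintype ι]

theorem rescalingMatrix_mul_mul_rescalingMatrix_apply (i : ι) (a b : R) (M : Matrix ι ι R)
    (j k : ι) :
    (rescalingMatrix i a * M * rescalingMatrix i b) j k =
      (Pi.mulSingle i a : ι → R) j * M j k * (Pi.mulSingle i b : ι → R) k := by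
  rw [rescalingMatrix, rescalingMatrix, mul_diagonal, diagonal_mul]

theorem rescalingMatrix_mul_mul_rescalingMatrix_apply_of_ne (i : ι) (a b : R)
    (M : Matrix ι ι R) {j k : ι} (hj : j ≠ i) (hk : k ≠ i) :
    (rescalingMatrix i a * M * rescalingMatrix i b) j k = M j k := by
  rw [rescalingMatrix_mul_mul_rescalingMatrix_apply, Pi.mulSingle_eq_of_ne hj,
    Pi.mulSingle_eq_of_ne hk, one_mul, mul_one]

theorem eq_rescalingMatrix_mul_mul_rescalingMatrix {i : ι} {a b : R} {M M' : Matrix ι ι R}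
    (hin : ∀ p, p ≠ i → M' p i = M p i * b) (hout : ∀ c, c ≠ i → M' i c = a * M i c)
    (hii : M' i i = a * M i i * b) (hrest : ∀ j k, j ≠ i → k ≠ i → M' j k = M j k) :
    M' = rescalingMatrix i a * M * rescalingMatrix i b := by
  ext j k
  rw [rescalingMatrix_mul_mul_rescalingMatrix_apply]
  by_cases hj : j = i <;> by_cases hk : k = i
  · simp [hj, hk, hii]
  · simp [hj, hk, hout k hk]
  · simp [hj, hk, hin j hj]
  · simp [hj, hk, hrest j k hj hk]

end Rescaling

theorem rescalingMatrix_mul_rescalingMatrix_inv [Fintype ι] {K : Type*} [DivisionRing K]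
    (i : ι) {α : K} (hα : α ≠ 0) :
    rescalingMatrix i α * rescalingMatrix i α⁻¹ = 1 := by
  rw [rescalingMatrix, rescalingMatrix, diagonal_mul_diagonal, ← Pi.mul_def,
    ← Pi.mulSingle_mul, mul_inv_cancel₀ hα, Pi.mulSingle_one]
  rfl

theorem rescaling_latent_variable_general {n : ℕ}
    (Λ Φ : Matrix (Fin n) (Fin n) ℝ)
    (hinv : IsUnit (1 - Λ).det) (hΦ : Φ.PosDef)
    (i : Fin n) (α : ℝ) (hα : α ≠ 0)
    (Λ' Φ' : Matrix (Fin n) (Fin n) ℝ)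
    (hΛ'in : ∀ p, p ≠ i → Λ' p i = α⁻¹ * Λ p i)
    (hΛ'out : ∀ c, c ≠ i → Λ' i c = α * Λ i c)
    (hΛ'ii : Λ' i i = Λ i i)
    (hΛ'rest : ∀ j k, j ≠ i → k ≠ i → Λ' j k = Λ j k)
    (hΦ'i : ∀ s, s ≠ i → Φ' i s = α⁻¹ * Φ i s ∧ Φ' s i = α⁻¹ * Φ i s)
    (hΦ'ii : Φ' i i = (α ^ 2)⁻¹ * Φ i i)
    (hΦ'rest : ∀ j k, j ≠ i → k ≠ i → Φ' j k = Φ j k) :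
    IsUnit (1 - Λ').det ∧
    ∀ j k, j ≠ i → k ≠ i →
      ((((1 - Λ')⁻¹)ᵀ * Φ' * (1 - Λ')⁻¹ : Matrix (Fin n) (Fin n) ℝ)) j k =
        ((((1 - Λ)⁻¹)ᵀ * Φ * (1 - Λ)⁻¹ : Matrix (Fin n) (Fin n) ℝ)) j k := by
  set P := rescalingMatrix i α
  set Q := rescalingMatrix i α⁻¹
  have hPQ : P * Q = 1 := rescalingMatrix_mul_rescalingMatrix_inv i hα
  have hΦsymm : ∀ j k, Φ j k = Φ k j := fun j k => by simpa using hΦ.isHermitian.apply k j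
  have hΛ' : Λ' = P * Λ * Q :=
    eq_rescalingMatrix_mul_mul_rescalingMatrix (fun p hp => by rw [hΛ'in p hp, mul_comm])
      hΛ'out (by rw [hΛ'ii]; field_simp) hΛ'rest
  have hΦ' : Φ' = Qᵀ * Φ * Q := by
    rw [transpose_rescalingMatrix]
    exact eq_rescalingMatrix_mul_mul_rescalingMatrix
      (fun s hs => by rw [(hΦ'i s hs).2, hΦsymm, mul_comm]) (fun s hs => (hΦ'i s hs).1)
      (by rw [hΦ'ii]; ring) hΦ'rest
  refine ⟨?_, fun j k hj hk => ?_⟩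
  · rwa [hΛ', one_sub_conj_of_mul_eq_one hPQ,
      det_conj_of_mul_eq_one hPQ (mul_eq_one_comm.mp hPQ)]
  · change impliedCov Λ' Φ' j k = impliedCov Λ Φ j k
    rw [hΛ', hΦ', impliedCov_conj_of_mul_eq_one hPQ, transpose_rescalingMatrix,
      rescalingMatrix_mul_mul_rescalingMatrix_apply_of_ne i _ _ _ hj hk]

/-- Lemma 1 of the paper, rescaling of latent variables.
Rescaling variable `i` of an SEM `(Λ, Φ)` by a nonzero factor `α` (coefficients
into `i` scaled by `α⁻¹`, coefficients out of `i` by `α`, error covariances of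
`i` by `α⁻¹`, error variance of `i` by `α⁻²`) keeps `1 - Λ'` invertible and
leaves the implied covariances among the other variables unchanged. -/
theorem rescaling_latent_variable {n : ℕ} (hn : 1 ≤ n)
    (Λ Φ : Matrix (Fin n) (Fin n) ℝ)
    (hinv : IsUnit (1 - Λ).det) (hΦ : Φ.PosDef)
    (i : Fin n) (α : ℝ) (hα : α ≠ 0)
    (Λ' Φ' : Matrix (Fin n) (Fin n) ℝ)
    (hΛ'in : ∀ p, p ≠ i → Λ' p i = α⁻¹ * Λ p i)
    (hΛ'out : ∀ c, c ≠ i → Λ' i c = α * Λ i c)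
    (hΛ'ii : Λ' i i = Λ i i)
    (hΛ'rest : ∀ j k, j ≠ i → k ≠ i → Λ' j k = Λ j k)
    (hΦ'i : ∀ s, s ≠ i → Φ' i s = α⁻¹ * Φ i s ∧ Φ' s i = α⁻¹ * Φ i s)
    (hΦ'ii : Φ' i i = (α ^ 2)⁻¹ * Φ i i)
    (hΦ'rest : ∀ j k, j ≠ i → k ≠ i → Φ' j k = Φ j k) :
    IsUnit (1 - Λ').det ∧
    ∀ j k, j ≠ i → k ≠ i →
      ((((1 - Λ')⁻¹)ᵀ * Φ' * (1 - Λ')⁻¹ : Matrix (Fin n) (Fin n) ℝ)) j k =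
        ((((1 - Λ)⁻¹)ᵀ * Φ * (1 - Λ)⁻¹ : Matrix (Fin n) (Fin n) ℝ)) j k :=
  rescaling_latent_variable_general Λ Φ hinv hΦ i α hα Λ' Φ' hΛ'in hΛ'out hΛ'ii hΛ'rest hΦ'i hΦ'ii
    hΦ'rest
end

section
/- Let π_1, …, π_k (k ≥ 1) be treks in a mixed graph G. Then every t-separator (L, R) of the set {π_1, …, π_k} has size at least k if and only if no two treks π_a, π_b with a ≠ b have a same-sided intersection. -/
open Classical

/-- A mixed graph: directed arrows `dir` and bidirected arrows `bi`
(symmetric and irreflexive). -/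
structure MixedGraph (V : Type) where
  dir : V → V → Prop
  bi : V → V → Prop
  bi_symm : ∀ u v, bi u v → bi v u
  bi_irrefl : ∀ v, ¬ bi v v

variable {V : Type}

/-- An ADMG is a mixed graph with no directed cycle. -/
def MixedGraph.Acyclic (G : MixedGraph V) : Prop :=
  ∀ v, ¬ Relation.TransGen G.dir v v

/-- A trek: a pair of directed paths (given as nonempty lists of vertices,
each starting at a "top") whose tops either coincide (case (i)) or are
joined by a bidirected arrow (case (ii)).  The left path ends at the
trek's source and the right path ends at its destination. -/
structure Trek (G : MixedGraph V) where
  left : List V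
  right : List V
  left_ne : left ≠ []
  right_ne : right ≠ []
  left_chain : left.Chain' G.dir
  right_chain : right.Chain' G.dir
  top_ok : left.head left_ne = right.head right_ne ∨
    G.bi (left.head left_ne) (right.head right_ne)

namespace Trek

variable {G : MixedGraph V}

/-- The left endpoint of a trek. -/
def src (t : Trek G) : V := t.left.getLast t.left_ne

/-- The right endpoint of a trek. -/
def dst (t : Trek G) : V := t.right.getLast t.right_ne

/-- `v` lies on the left side of the trek. -/
def onLeft (t : Trek G) (v : V) : Prop := v ∈ t.left

/-- `v` lies on the right side of the trek. -/
def onRight (t : Trek G) (v : V) : Prop := v ∈ t.right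

/-- The number of arrows of a trek (counting the bidirected arrow if the
tops differ). -/
noncomputable def length (t : Trek G) : ℕ :=
  (t.left.length - 1) + (t.right.length - 1) +
    (if t.left.head t.left_ne = t.right.head t.right_ne then 0 else 1)

/-- Two treks have a same-sided intersection if some vertex lies on both
their left sides or on both their right sides. -/
def SameSided (t₁ t₂ : Trek G) : Prop :=
  ∃ v, (t₁.onLeft v ∧ t₂.onLeft v) ∨ (t₁.onRight v ∧ t₂.onRight v)

end Trek

/-- `(L, R)` t-separates the vertex sets `A` and `B`. -/
def TSep (G : MixedGraph V) (L R : Finset V) (A B : Set V) : Prop :=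
  ∀ t : Trek G, t.src ∈ A → t.dst ∈ B →
    (∃ v ∈ L, t.onLeft v) ∨ (∃ v ∈ R, t.onRight v)

/-- The graph obtained by deleting all arrows from a vertex of `X` to `y`. -/
def MixedGraph.removeOut (G : MixedGraph V) (X : Set V) (y : V) : MixedGraph V where
  dir u v := G.dir u v ∧ ¬ (u ∈ X ∧ v = y)
  bi := G.bi
  bi_symm := G.bi_symm
  bi_irrefl := G.bi_irrefl

/-!
Encode the two sides of a trek as one subset of `V ⊕ V`, the left side in the first copy
and the right side in the second. A pair `(L, R)` t-separates a trek exactly when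
`L.disjSum R` meets this set, and two treks have a same-sided intersection exactly when
their sets meet. The theorem thus becomes a fact about hitting sets of a finite family of
nonempty sets: the family needs as many points as it has members iff its members are
pairwise disjoint. Disjointness makes any choice of hit points injective; conversely a
point shared by two members hits both, and one point of each remaining member completes
a hitting set that is one point too small.
-/

open Finset Function

section HittingSet

variable {ι α : Type*} [Fintype ι] {S : ι → Set α}

theorem card_le_card_of_pairwiseDisjoint_of_hits (hS : Pairwise (Disjoint on S))
    {H : Finset α} (hH : ∀ i, ∃ x ∈ H, x ∈ S i) : Fintype.card ι ≤ #H := by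
  choose g hgH hgS using hH
  have hg : Injective g := fun i j hij => by
    by_contra hne
    exact Set.disjoint_left.1 (hS hne) (hgS i) (hij ▸ hgS j)
  rw [← card_univ]
  exact card_le_card_of_injOn g (fun i _ => hgH i) hg.injOn

theorem exists_hits_card_lt_of_mem_of_mem (hS : ∀ i, (S i).Nonempty) {i j : ι} (hij : i ≠ j)
    {x : α} (hxi : x ∈ S i) (hxj : x ∈ S j) :
    ∃ H : Finset α, (∀ c, ∃ y ∈ H, y ∈ S c) ∧ #H < Fintype.card ι := by
  choose p hp using hS
  set f : ι → α := fun c => if c = i then x else p c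
  have hf : ∀ c, f c ∈ S c := fun c => by
    by_cases hci : c = i
    · simp [f, hci, hxi]
    · simp [f, hci, hp c]
  refine ⟨(univ.erase j).image f, fun c => ?_, ?_⟩
  · by_cases hcj : c = j
    · subst hcj
      exact ⟨f i, mem_image_of_mem f (mem_erase.2 ⟨hij, mem_univ i⟩), by simpa [f] using hxj⟩
    · exact ⟨f c, mem_image_of_mem f (mem_erase.2 ⟨hcj, mem_univ c⟩), hf c⟩
  · calc #((univ.erase j).image f) ≤ #(univ.erase j) := card_image_le
      _ < #(univ : Finset ι) := card_erase_lt_of_mem (mem_univ j)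
      _ = Fintype.card ι := card_univ

theorem card_le_card_of_hits_iff_pairwiseDisjoint (hS : ∀ i, (S i).Nonempty) :
    (∀ H : Finset α, (∀ i, ∃ x ∈ H, x ∈ S i) → Fintype.card ι ≤ #H) ↔
      Pairwise (Disjoint on S) := by
  refine ⟨fun hlarge i j hij => Set.disjoint_left.2 fun x hxi hxj => ?_,
    fun hS _ => card_le_card_of_pairwiseDisjoint_of_hits hS⟩
  obtain ⟨H, hH, hcard⟩ := exists_hits_card_lt_of_mem_of_mem hS hij hxi hxj
  exact hcard.not_ge (hlarge H hH)

end HittingSet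

theorem Finset.forall_disjSum_iff {α β : Type*} {P : Finset (α ⊕ β) → Prop} :
    (∀ (L : Finset α) (R : Finset β), P (L.disjSum R)) ↔ ∀ H, P H :=
  ⟨fun h H => toLeft_disjSum_toRight (u := H) ▸ h H.toLeft H.toRight, fun h _ _ => h _⟩

namespace Trek

variable {G : MixedGraph V}

def sides (t : Trek G) : Set (V ⊕ V) := {x | Sum.elim t.onLeft t.onRight x}

theorem sides_nonempty (t : Trek G) : t.sides.Nonempty :=
  ⟨.inl _, List.head_mem t.left_ne⟩

theorem sameSided_iff_not_disjoint_sides {t₁ t₂ : Trek G} :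
    SameSided t₁ t₂ ↔ ¬ Disjoint t₁.sides t₂.sides := by
  simp [SameSided, Set.not_disjoint_iff, sides, Sum.exists, exists_or]

theorem exists_mem_disjSum_mem_sides_iff (t : Trek G) (L R : Finset V) :
    (∃ x ∈ L.disjSum R, x ∈ t.sides) ↔ (∃ v ∈ L, t.onLeft v) ∨ (∃ v ∈ R, t.onRight v) := by
  simp [sides, Sum.exists]

end Trek

theorem every_separator_large_iff_no_same_sided_intersection_general
    {V : Type} (G : MixedGraph V) (k : ℕ) (π : Fin k → Trek G) :
    (∀ L R : Finset V,
        (∀ a : Fin k, (∃ v ∈ L, (π a).onLeft v) ∨ (∃ v ∈ R, (π a).onRight v)) →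
        k ≤ L.card + R.card)
    ↔ ∀ a b : Fin k, a ≠ b → ¬ Trek.SameSided (π a) (π b) := by
  calc _ ↔ ∀ H : Finset (V ⊕ V), (∀ a, ∃ x ∈ H, x ∈ (π a).sides) → k ≤ #H := by
        simp only [← Trek.exists_mem_disjSum_mem_sides_iff, ← card_disjSum]
        exact forall_disjSum_iff
          (P := fun H => (∀ a, ∃ x ∈ H, x ∈ (π a).sides) → k ≤ #H)
    _ ↔ Pairwise (Disjoint on fun a => (π a).sides) := by
        simpa using card_le_card_of_hits_iff_pairwiseDisjoint fun a => (π a).sides_nonempty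
    _ ↔ _ := by simp [Pairwise, Trek.sameSided_iff_not_disjoint_sides]

/-- every t-separator of the family of treks `π 1, …, π k` has
size at least `k` iff no two of the treks have a same-sided intersection. -/
theorem every_separator_large_iff_no_same_sided_intersection
    {V : Type} (G : MixedGraph V) (k : ℕ) (hk : 1 ≤ k) (π : Fin k → Trek G) :
    (∀ L R : Finset V,
        (∀ a : Fin k, (∃ v ∈ L, (π a).onLeft v) ∨ (∃ v ∈ R, (π a).onRight v)) →
        k ≤ L.card + R.card)
    ↔ ∀ a b : Fin k, a ≠ b → ¬ Trek.SameSided (π a) (π b) :=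
  every_separator_large_iff_no_same_sided_intersection_general G k π
end

section
/- Let π_1, …, π_l (l ≥ 2) be treks in a mixed graph G, where π_j is a trek from a_j to b_j, such that no two of them have a same-sided intersection, and suppose that for each j (indices taken modulo l) there is a vertex v_j lying on the left side of π_j and on the right side of π_{j+1}. Then there exist treks σ_1, …, σ_l, where σ_j is a trek from a_j to b_{j+1} (indices modulo l), such that the total length of σ_1, …, σ_l is strictly smaller than the total length of π_1, …, π_l and no two of σ_1, …, σ_l have a same-sided intersection. -/
open Classical

variable {V : Type}

/-!
Each `π j` is cut at its prescribed vertex `v j`: the part of the left side of `π j` below `v j`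
and the part of the right side of `π (j + 1)` below `v j` form a trek with top `v j`. Its left
side lies on the left of `π j` and its right side on the right of `π (j + 1)`, so no same-sided
intersections are created, and no arrow is gained. One is lost at `j = 0`: `v 0` lies on the
right of `π 1`, hence not on the right of `π 0`, so either it is strictly below the left top of
`π 0`, or it is that top and the bidirected arrow of `π 0` is dropped.
-/

theorem Fin.self_ne_add_one {l : ℕ} [NeZero l] (hl : 2 ≤ l) (j : Fin l) : j ≠ j + 1 := by
  intro h
  have := congrArg Fin.val (add_eq_left.mp h.symm)
  simp [Nat.mod_eq_of_lt hl] at this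

namespace Trek

variable {G : MixedGraph V}

noncomputable def splice (s t : Trek G) (v : V) (hs : s.onLeft v) (ht : t.onRight v) : Trek G where
  left := s.left.drop (s.left.idxOf v)
  right := t.right.drop (t.right.idxOf v)
  left_ne := by simpa using List.idxOf_lt_length_of_mem hs
  right_ne := by simpa using List.idxOf_lt_length_of_mem ht
  left_chain := List.IsChain.drop s.left_chain _
  right_chain := List.IsChain.drop t.right_chain _
  top_ok := Or.inl (by rw [List.head_drop, List.head_drop, List.getElem_idxOf, List.getElem_idxOf])

section splice

variable {s t : Trek G} {v : V} (hs : s.onLeft v) (ht : t.onRight v)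

theorem splice_src : (s.splice t v hs ht).src = s.src :=
  List.getLast_drop _

theorem splice_dst : (s.splice t v hs ht).dst = t.dst :=
  List.getLast_drop _

theorem onLeft_of_onLeft_splice {w : V} (h : (s.splice t v hs ht).onLeft w) : s.onLeft w :=
  List.mem_of_mem_drop h

theorem onRight_of_onRight_splice {w : V} (h : (s.splice t v hs ht).onRight w) : t.onRight w :=
  List.mem_of_mem_drop h

theorem splice_length_add_idxOf_le :
    (s.splice t v hs ht).length + s.left.idxOf v ≤ (s.left.length - 1) + (t.right.length - 1) := by
  have hi := List.idxOf_lt_length_of_mem hs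
  have hk := List.idxOf_lt_length_of_mem ht
  simp only [length, splice, List.length_drop, List.head_drop, List.getElem_idxOf, if_true]
  omega

end splice

theorem sameSided_of_sameSided_splice {s t s' t' : Trek G} {v v' : V} {hs : s.onLeft v}
    {ht : t.onRight v} {hs' : s'.onLeft v'} {ht' : t'.onRight v'}
    (h : SameSided (s.splice t v hs ht) (s'.splice t' v' hs' ht')) :
    SameSided s s' ∨ SameSided t t' := by
  obtain ⟨w, ⟨hl, hl'⟩ | ⟨hr, hr'⟩⟩ := h
  · exact Or.inl ⟨w, Or.inl ⟨onLeft_of_onLeft_splice _ _ hl, onLeft_of_onLeft_splice _ _ hl'⟩⟩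
  · exact Or.inr ⟨w, Or.inr ⟨onRight_of_onRight_splice _ _ hr, onRight_of_onRight_splice _ _ hr'⟩⟩

theorem sub_one_add_sub_one_le_length (t : Trek G) :
    (t.left.length - 1) + (t.right.length - 1) ≤ t.length :=
  Nat.le_add_right _ _

theorem sub_one_add_sub_one_lt_length_add_idxOf {t : Trek G} {v : V} (hl : t.onLeft v)
    (hr : ¬ t.onRight v) :
    (t.left.length - 1) + (t.right.length - 1) < t.length + t.left.idxOf v := by
  rcases Nat.eq_zero_or_pos (t.left.idxOf v) with h0 | hpos
  · have hv : t.left.head t.left_ne = v := by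
      rw [List.head_eq_getElem, ← List.getElem_idxOf (List.idxOf_lt_length_of_mem hl)]
      simp only [h0]
    have htops : t.left.head t.left_ne ≠ t.right.head t.right_ne :=
      fun h => hr (hv ▸ h ▸ List.head_mem _)
    simp only [length, if_neg htops, h0]
    omega
  · have := t.sub_one_add_sub_one_le_length
    omega

theorem sum_length_splice_lt {l : ℕ} [NeZero l] (π : Fin l → Trek G)
    (v : Fin l → V) (hL : ∀ j, (π j).onLeft (v j)) (hR : ∀ j, (π (j + 1)).onRight (v j))
    {j₀ : Fin l} (hj₀ : ¬ (π j₀).onRight (v j₀)) :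
    ∑ j, ((π j).splice (π (j + 1)) (v j) (hL j) (hR j)).length < ∑ j, (π j).length := by
  set a := fun j => (π j).left.length - 1
  set b := fun j => (π j).right.length - 1
  set i := fun j => (π j).left.idxOf (v j)
  have hb : ∑ j, b (j + 1) = ∑ j, b j := Equiv.sum_comp (Equiv.addRight 1) b
  have hσ : ∑ j, (((π j).splice _ _ (hL j) (hR j)).length + i j) ≤ ∑ j, (a j + b (j + 1)) :=
    Finset.sum_le_sum fun j _ => splice_length_add_idxOf_le (hL j) (hR j)
  have hπ : ∑ j, (a j + b j) < ∑ j, ((π j).length + i j) :=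
    Finset.sum_lt_sum (fun j _ => (sub_one_add_sub_one_le_length _).trans (Nat.le_add_right _ _))
      ⟨j₀, Finset.mem_univ _, sub_one_add_sub_one_lt_length_add_idxOf (hL j₀) hj₀⟩
  simp only [Finset.sum_add_distrib] at hσ hπ
  omega

end Trek

/-- cycle rearrangement.  Given treks `π 0, …, π (l-1)` (l ≥ 2)
without same-sided intersections such that for each `j` some vertex lies on
the left side of `π j` and the right side of `π (j+1)` (cyclically), there
are treks `σ j` from `(π j).src` to `(π (j+1)).dst` of strictly smaller total
length, again without same-sided intersections. -/
theorem cycle_rearrangement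
    {V : Type} (G : MixedGraph V) (l : ℕ) [NeZero l] (hl : 2 ≤ l)
    (π : Fin l → Trek G)
    (hss : ∀ j j' : Fin l, j ≠ j' → ¬ Trek.SameSided (π j) (π j'))
    (hcyc : ∀ j : Fin l, ∃ v, (π j).onLeft v ∧ (π (j + 1)).onRight v) :
    ∃ σ : Fin l → Trek G,
      (∀ j : Fin l, (σ j).src = (π j).src ∧ (σ j).dst = (π (j + 1)).dst) ∧
      (∑ j : Fin l, (σ j).length) < (∑ j : Fin l, (π j).length) ∧
      (∀ j j' : Fin l, j ≠ j' → ¬ Trek.SameSided (σ j) (σ j')) := by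
  choose v hL hR using hcyc
  have h₀ : ¬ (π 0).onRight (v 0) := fun h =>
    hss 0 (0 + 1) (Fin.self_ne_add_one hl 0) ⟨v 0, Or.inr ⟨h, hR 0⟩⟩
  refine ⟨fun j => (π j).splice (π (j + 1)) (v j) (hL j) (hR j),
    fun j => ⟨Trek.splice_src _ _, Trek.splice_dst _ _⟩, Trek.sum_length_splice_lt π v hL hR h₀,
    fun j j' hne h => ?_⟩
  rcases Trek.sameSided_of_sameSided_splice h with h | h
  · exact hss j j' hne h
  · exact hss (j + 1) (j' + 1) ((add_left_injective 1).ne hne) h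
end

section
/- Let G be an ADMG and let A and B be vertex sets such that every t-separator (L, R) of A and B in G has size at least k, where k ≥ 1. Then there exist k treks in G, each from a vertex of A to a vertex of B, no two of which have a same-sided intersection (in particular, their left endpoints are k distinct vertices of A and their right endpoints are k distinct vertices of B). -/
/-!
A trek from `a` to `b` is a walk from `inl a` to `inr b` in a doubled digraph on `V ⊕ V`, two
treks have a same-sided intersection exactly when their walks share a vertex, and a vertex
separator `S` of the doubled graph gives the t-separator `(S.toLeft, S.toRight)` of no larger size.
So the theorem is the vertex form of Menger's theorem for a digraph that may be infinite. For
finitely many edges this is Göring's induction on the edges; in general, if every set of fewer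
than `k` vertices misses some `A`–`B` walk, then finitely many walks already witness this, and
Menger's theorem for the finitely many edges they use applies.
-/
open Classical

variable {V : Type}

namespace List

variable {α : Type*}

theorem exists_prefix_first_mem {X : Set α} :
    ∀ {l : List α}, (∃ v ∈ l, v ∈ X) → ∃ p u, u ∈ X ∧ (∀ v ∈ p, v ∉ X) ∧ p ++ [u] <+: l
  | [], ⟨_, hv, _⟩ => absurd hv not_mem_nil
  | a :: l, ⟨v, hv, hvX⟩ => by
    by_cases ha : a ∈ X
    · exact ⟨[], a, ha, by simp, by simp⟩
    · have hvl : v ∈ l := (mem_cons.1 hv).resolve_left fun h => ha (h ▸ hvX)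
      obtain ⟨p, u, hu, hp, hpl⟩ := exists_prefix_first_mem ⟨v, hvl, hvX⟩
      exact ⟨a :: p, u, hu, by simpa [ha] using hp, (prefix_cons_inj a).2 hpl⟩

theorem IsChain.imp_of_mem_dropLast_imp {R S : α → α → Prop} {l : List α}
    (H : ∀ a b, a ∈ l.dropLast → R a b → S a b) (h : l.IsChain R) : l.IsChain S :=
  isChain_iff_forall_rel_of_append_cons_cons.2 fun a b l₁ l₂ hl =>
    H a b (by simp [hl]) (isChain_iff_forall_rel_of_append_cons_cons.1 h hl)

theorem exists_eq_append_cons_of_mem_concat {p : List α} {u z : α} (h : z ∈ p ++ [u]) :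
    ∃ l₁ l₂, p ++ [u] = l₁ ++ z :: l₂ ∧ l₁ ⊆ p := by
  rcases mem_append.1 h with h | h
  · obtain ⟨s, t, rfl⟩ := append_of_mem h
    exact ⟨s, t ++ [u], by simp, subset_append_left _ _⟩
  · exact ⟨p, [], by simp [(mem_singleton.1 h).symm], Subset.refl _⟩

theorem exists_eq_append_cons_of_mem_cons {q : List α} {w z : α} (h : z ∈ w :: q) :
    ∃ l₁ l₂, w :: q = l₁ ++ z :: l₂ ∧ l₂ ⊆ q := by
  rcases mem_cons.1 h with rfl | h
  · exact ⟨[], q, rfl, Subset.refl _⟩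
  · obtain ⟨s, t, rfl⟩ := append_of_mem h
    exact ⟨w :: s, t, rfl, fun v hv => by simp [hv]⟩

end List

theorem Finset.exists_injective_fin_mem {α : Type*} {X : Finset α} {k : ℕ} (h : k ≤ X.card) :
    ∃ e : Fin k → α, Function.Injective e ∧ ∀ i, e i ∈ X :=
  ⟨fun i => X.equivFin.symm (Fin.castLE h i),
    fun _ _ hij => Fin.castLE_injective h (X.equivFin.symm.injective (Subtype.val_injective hij)),
    fun _ => (X.equivFin.symm _).2⟩

theorem exists_finset_forall_card_lt_exists_disjoint {α ι : Type*} (P : ι → Finset α)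
    {p : ι → Prop} {m : ℕ} (h : ∀ S : Finset α, S.card < m → ∃ i, p i ∧ Disjoint S (P i)) :
    ∃ I : Finset ι, (∀ i ∈ I, p i) ∧ ∀ S : Finset α, S.card < m → ∃ i ∈ I, Disjoint S (P i) := by
  induction m generalizing p with
  | zero => exact ⟨∅, by simp, by simp⟩
  | succ m ih =>
    obtain ⟨i₀, hi₀, -⟩ := h ∅ (by simp)
    -- A small `S` meeting `P i₀` contains some `v ∈ P i₀`, and the `P i` avoiding `v` are
    -- handled by induction.
    have hv (v : α) (_ : v ∈ P i₀) : ∃ I : Finset ι, (∀ i ∈ I, p i ∧ v ∉ P i) ∧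
        ∀ S : Finset α, S.card < m → ∃ i ∈ I, Disjoint S (P i) :=
      ih fun S hS => by
        obtain ⟨i, hi, hdisj⟩ := h (insert v S) ((Finset.card_insert_le _ _).trans_lt (by omega))
        exact ⟨i, ⟨hi, Finset.disjoint_left.1 hdisj (Finset.mem_insert_self _ _)⟩,
          Finset.disjoint_of_subset_left (Finset.subset_insert _ _) hdisj⟩
    choose! I hIp hI using hv
    refine ⟨insert i₀ ((P i₀).biUnion I), ?_, fun S hS => ?_⟩
    · simp only [Finset.mem_insert, Finset.mem_biUnion]
      rintro i (rfl | ⟨v, hv, hi⟩)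
      exacts [hi₀, (hIp v hv i hi).1]
    · by_cases hS₀ : Disjoint S (P i₀)
      · exact ⟨i₀, Finset.mem_insert_self _ _, hS₀⟩
      · obtain ⟨v, hvS, hv⟩ := Finset.not_disjoint_iff.1 hS₀
        obtain ⟨i, hi, hdisj⟩ := hI v hv (S.erase v) (by
          rw [Finset.card_erase_of_mem hvS]; have := Finset.card_pos.2 ⟨v, hvS⟩; omega)
        refine ⟨i, Finset.mem_insert_of_mem (Finset.mem_biUnion.2 ⟨v, hv, hi⟩), ?_⟩
        rw [← Finset.insert_erase hvS]
        exact Finset.disjoint_insert_left.2 ⟨(hIp v hv i hi).2, hdisj⟩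

namespace Menger

variable {W : Type*} {E E' : Set (W × W)} {A A' B B' : Set W} {l p q : List W} {u w x y : W}
  {k : ℕ}

def IsWalk (E : Set (W × W)) (A B : Set W) (l : List W) : Prop :=
  l.IsChain (fun u v => (u, v) ∈ E) ∧ (∃ a ∈ A, l.head? = some a) ∧ ∃ b ∈ B, l.getLast? = some b

def Separates (E : Set (W × W)) (A B : Set W) (S : Finset W) : Prop :=
  ∀ l, IsWalk E A B l → ∃ v ∈ S, v ∈ l

theorem IsWalk.mono (h : IsWalk E A B l) (hE : E ⊆ E') (hA : A ⊆ A') (hB : B ⊆ B') :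
    IsWalk E' A' B' l :=
  let ⟨hl, ⟨a, ha, hla⟩, ⟨b, hb, hlb⟩⟩ := h
  ⟨hl.imp fun _ _ h => hE h, ⟨a, hA ha, hla⟩, ⟨b, hB hb, hlb⟩⟩

theorem isWalk_reverse : IsWalk (Prod.swap ⁻¹' E) B A l.reverse ↔ IsWalk E A B l := by
  simp only [IsWalk, List.isChain_reverse, List.head?_reverse, List.getLast?_reverse]
  exact ⟨fun ⟨h₁, h₂, h₃⟩ => ⟨h₁, h₃, h₂⟩, fun ⟨h₁, h₂, h₃⟩ => ⟨h₁, h₃, h₂⟩⟩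

theorem separates_swap {S : Finset W} :
    Separates (Prod.swap ⁻¹' E) B A S ↔ Separates E A B S := by
  refine ⟨fun h l hl => ?_, fun h l hl => ?_⟩
  · obtain ⟨v, hv, hvl⟩ := h l.reverse (isWalk_reverse.2 hl)
    exact ⟨v, hv, List.mem_reverse.1 hvl⟩
  · obtain ⟨v, hv, hvl⟩ := h l.reverse ((isWalk_reverse (E := Prod.swap ⁻¹' E)).2 hl)
    exact ⟨v, hv, List.mem_reverse.1 hvl⟩

theorem separates_target (S : Finset W) : Separates E A S S := fun _ ⟨_, _, b, hb, hlb⟩ =>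
  ⟨b, hb, List.mem_of_getLast? hlb⟩

theorem IsWalk.exists_eq_singleton_of_empty (h : IsWalk ∅ A B l) : ∃ v ∈ A ∩ B, l = [v] := by
  obtain ⟨hc, ⟨a, ha, hla⟩, ⟨b, hb, hlb⟩⟩ := h
  rcases l with _ | ⟨v, _ | ⟨v', l⟩⟩
  · simp at hla
  · simp only [List.head?_cons, List.getLast?_singleton, Option.some.injEq] at hla hlb
    exact ⟨v, ⟨hla ▸ ha, hlb ▸ hb⟩, rfl⟩
  · exact absurd (List.isChain_cons_cons.1 hc).1 (Set.notMem_empty _)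

theorem IsWalk.of_prefix (h : IsWalk E A B l) (hp : p ++ [u] <+: l) :
    IsWalk E A {u} (p ++ [u]) := by
  obtain ⟨hc, ⟨a, ha, hla⟩, -⟩ := h
  refine ⟨hc.prefix hp, ⟨a, ha, ?_⟩, u, rfl, by simp⟩
  obtain ⟨t, rfl⟩ := hp
  rwa [List.head?_append_of_ne_nil _ (by simp)] at hla

theorem isChain_of_isChain_insert (h : l.IsChain fun u v => (u, v) ∈ insert (x, y) E)
    (hx : x ∉ l.dropLast) : l.IsChain fun u v => (u, v) ∈ E :=
  h.imp_of_mem_dropLast_imp fun a b ha hab =>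
    (Set.mem_insert_iff.1 hab).resolve_left fun h => hx (by rw [← (Prod.mk.inj h).1]; exact ha)

theorem Separates.insert_edge_of_insert_target {S T : Finset W} (hS : Separates E A B S)
    (hT : Separates E A ↑(insert x S) T) : Separates (insert (x, y) E) A B T := by
  intro l hl
  have hmeet : ∃ v ∈ l, v ∈ (↑(insert x S) : Set W) := by
    by_contra! hno
    have hxl : x ∉ l.dropLast :=
      fun hx => hno x (List.dropLast_subset _ hx) (Finset.mem_insert_self x S)
    obtain ⟨v, hvS, hvl⟩ := hS l ⟨isChain_of_isChain_insert hl.1 hxl, hl.2⟩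
    exact hno v hvl (Finset.mem_insert_of_mem hvS)
  obtain ⟨p, u, hu, hp, hpl⟩ := List.exists_prefix_first_mem hmeet
  have hpu := hl.of_prefix hpl
  have hxp : x ∉ (p ++ [u]).dropLast := by
    simpa using fun h => hp x h (Finset.mem_insert_self x S)
  obtain ⟨v, hvT, hv⟩ :=
    hT (p ++ [u]) ⟨isChain_of_isChain_insert hpu.1 hxp, hpu.2.1, u, hu, by simp⟩
  exact ⟨v, hvT, hpl.subset hv⟩

theorem Separates.insert_edge_of_insert_source {S T : Finset W} (hS : Separates E A B S)
    (hT : Separates E ↑(insert y S) B T) : Separates (insert (x, y) E) A B T := by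
  have hE : Prod.swap ⁻¹' insert (x, y) E = insert (y, x) (Prod.swap ⁻¹' E) := by
    ext ⟨a, b⟩; simp [and_comm]
  rw [← separates_swap, hE]
  exact (separates_swap.2 hS).insert_edge_of_insert_target (separates_swap.2 hT)

theorem Separates.eq_of_mem_of_mem {S : Finset W} (hS : Separates E A B S)
    (ha : IsWalk E A {u} (p ++ [u])) (hb : IsWalk E {w} B (w :: q))
    (hp : ∀ v ∈ p, v ∉ S) (hq : ∀ v ∈ q, v ∉ S) {z : W}
    (hz₁ : z ∈ p ++ [u]) (hz₂ : z ∈ w :: q) : z ∈ S ∧ z = u ∧ z = w := by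
  have hzS : z ∈ S := by
    by_contra hz
    obtain ⟨l₁, l₂, hl, hl₁⟩ := List.exists_eq_append_cons_of_mem_concat hz₁
    obtain ⟨m₁, m₂, hm, hm₂⟩ := List.exists_eq_append_cons_of_mem_cons hz₂
    obtain ⟨hca, ⟨a, haA, hla⟩, -⟩ := ha
    obtain ⟨hcb, -, ⟨b, hbB, hlb⟩⟩ := hb
    rw [hl] at hca hla
    rw [hm] at hcb hlb
    have hwalk : IsWalk E A B (l₁ ++ z :: m₂) :=
      ⟨List.isChain_split.2 ⟨(List.isChain_split.1 hca).1, (List.isChain_split.1 hcb).2⟩,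
        ⟨a, haA, by simpa [List.head?_append] using hla⟩,
        ⟨b, hbB, by simpa [List.getLast?_append] using hlb⟩⟩
    obtain ⟨v, hvS, hv⟩ := hS _ hwalk
    rcases List.mem_append.1 hv with hv | hv
    · exact hp v (hl₁ hv) hvS
    · rcases List.mem_cons.1 hv with rfl | hv
      exacts [hz hvS, hq v (hm₂ hv) hvS]
  refine ⟨hzS, ?_, ?_⟩
  · rcases List.mem_append.1 hz₁ with h | h
    exacts [absurd hzS (hp z h), List.mem_singleton.1 h]
  · rcases List.mem_cons.1 hz₂ with h | h
    exacts [h, absurd hzS (hq z h)]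

theorem IsWalk.append_of_link (ha : IsWalk E A {u} (p ++ [u])) (hb : IsWalk E {w} B (w :: q))
    (h : u = w ∨ (u, w) ∈ E) : ∃ l, IsWalk E A B l ∧ l ⊆ p ++ [u] ++ w :: q := by
  obtain ⟨hca, ⟨a, haA, hla⟩, -⟩ := ha
  obtain ⟨hcb, -, ⟨b, hbB, hlb⟩⟩ := hb
  rcases h with rfl | h
  · refine ⟨p ++ [u] ++ q, ⟨hca.append_overlap hcb (List.cons_ne_nil _ _), ⟨a, haA, ?_⟩,
      ⟨b, hbB, ?_⟩⟩, fun v hv => by simp_all⟩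
    · rwa [List.head?_append_of_ne_nil _ (by simp)]
    · simpa [List.getLast?_append] using hlb
  · refine ⟨p ++ [u] ++ w :: q, ⟨hca.append hcb (by simpa using h), ⟨a, haA, ?_⟩,
      ⟨b, hbB, ?_⟩⟩, List.Subset.refl _⟩
    · rwa [List.head?_append_of_ne_nil _ (by simp)]
    · rwa [List.getLast?_append_of_ne_nil _ (by simp)]

theorem exists_walks_to_each_of_card_le {X : Finset W} (hX : X.card ≤ k) {P : Fin k → List W}
    (hP : ∀ i, IsWalk E A X (P i)) (hdisj : Pairwise fun i j => (P i).Disjoint (P j)) :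
    ∃ p : W → List W, (∀ u ∈ X, IsWalk E A {u} (p u ++ [u]) ∧ ∀ v ∈ p u, v ∉ X) ∧
      (X : Set W).Pairwise fun u u' => (p u ++ [u]).Disjoint (p u' ++ [u']) := by
  have htrunc (i : Fin k) : ∃ p u, u ∈ X ∧ (∀ v ∈ p, v ∉ X) ∧ p ++ [u] <+: P i :=
    let ⟨_, _, b, hb, hlb⟩ := hP i
    List.exists_prefix_first_mem ⟨b, List.mem_of_getLast? hlb, hb⟩
  choose p e he hp hpre using htrunc
  have hmem (i : Fin k) : e i ∈ P i := (hpre i).subset (by simp)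
  have he_inj : Function.Injective e := fun i j hij => by
    by_contra hne
    exact hdisj hne (hmem i) (hij ▸ hmem j)
  have hsurj : ∀ u ∈ X, ∃ l : List W, ∃ i, e i = u ∧ p i = l := fun u hu => by
    obtain ⟨i, -, rfl⟩ := Finset.surj_on_of_inj_on_of_card_le (s := Finset.univ)
      (fun i _ => e i) (fun i _ => he i) (fun i j _ _ h => he_inj h) (by simpa using hX) u hu
    exact ⟨p i, i, rfl, rfl⟩
  choose! q hq using hsurj
  refine ⟨q, fun u hu => ?_, fun u hu u' hu' hne => ?_⟩
  · obtain ⟨i, rfl, hi⟩ := hq u hu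
    exact hi ▸ ⟨(hP i).of_prefix (hpre i), hp i⟩
  · obtain ⟨i, rfl, hi⟩ := hq u hu
    obtain ⟨j, rfl, hj⟩ := hq u' hu'
    rw [← hi, ← hj]
    exact List.disjoint_of_subset_left (hpre i).subset
      (List.disjoint_of_subset_right (hpre j).subset (hdisj fun h => hne (h ▸ rfl)))

theorem exists_walks_from_each_of_card_le {Y : Finset W} (hY : Y.card ≤ k) {P : Fin k → List W}
    (hP : ∀ i, IsWalk E Y B (P i)) (hdisj : Pairwise fun i j => (P i).Disjoint (P j)) :
    ∃ q : W → List W, (∀ w ∈ Y, IsWalk E {w} B (w :: q w) ∧ ∀ v ∈ q w, v ∉ Y) ∧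
      (Y : Set W).Pairwise fun w w' => (w :: q w).Disjoint (w' :: q w') := by
  obtain ⟨p, hp, hpd⟩ := exists_walks_to_each_of_card_le (E := Prod.swap ⁻¹' E) hY
    (P := fun i => (P i).reverse) (fun i => isWalk_reverse.2 (hP i))
    fun i j hij => by simpa using hdisj hij
  refine ⟨fun w => (p w).reverse, fun w hw => ⟨?_, by simpa using (hp w hw).2⟩,
    fun w hw w' hw' hne => ?_⟩
  · have h := (isWalk_reverse (E := Prod.swap ⁻¹' E)).2 (hp w hw).1
    simp only [List.reverse_append, List.reverse_singleton, List.singleton_append] at h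
    exact h
  · refine List.disjoint_of_subset_left (l := p w ++ [w]) (fun v hv => ?_)
      (List.disjoint_of_subset_right (l := p w' ++ [w']) (fun v hv => ?_) (hpd hw hw' hne)) <;>
    simpa [or_comm] using hv

/-- The walk into `u ∈ S ∪ {x}` is continued by the walk out of `u`, or out of `y` through the
edge `(x, y)` if `u = x`; walks into and out of these sets meet only at common endpoints in `S`. -/
theorem exists_walks_join {S : Finset W} (hS : Separates E A B S) (hxS : x ∉ S) (hyS : y ∉ S)
    {f g : W → List W}
    (hf : ∀ u ∈ insert x S, IsWalk E A {u} (f u ++ [u]) ∧ ∀ v ∈ f u, v ∉ insert x S)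
    (hfd : (↑(insert x S) : Set W).Pairwise fun u u' => (f u ++ [u]).Disjoint (f u' ++ [u']))
    (hg : ∀ w ∈ insert y S, IsWalk E {w} B (w :: g w) ∧ ∀ v ∈ g w, v ∉ insert y S)
    (hgd : (↑(insert y S) : Set W).Pairwise fun w w' => (w :: g w).Disjoint (w' :: g w')) :
    ∃ P : W → List W, (∀ u ∈ insert x S, IsWalk (insert (x, y) E) A B (P u)) ∧
      (↑(insert x S) : Set W).Pairwise fun u u' => (P u).Disjoint (P u') := by
  set σ := Equiv.swap x y
  have hσS (u) (hu : u ∈ S) : σ u = u :=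
    Equiv.swap_apply_of_ne_of_ne (fun h => hxS (h ▸ hu)) (fun h => hyS (h ▸ hu))
  have hσ (u) (hu : u ∈ insert x S) : σ u ∈ insert y S ∧ (σ u ∈ S → σ u = u) := by
    rcases Finset.mem_insert.1 hu with rfl | hu
    · simp [σ, hyS]
    · simp [hσS u hu, hu]
  have hmix (u) (hu : u ∈ insert x S) (u') (hu' : u' ∈ insert x S) (z) (hz₁ : z ∈ f u ++ [u])
      (hz₂ : z ∈ σ u' :: g (σ u')) : u = u' := by
    obtain ⟨hzS, hzu, hzσ⟩ := hS.eq_of_mem_of_mem (hf u hu).1 (hg _ (hσ u' hu').1).1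
      (fun v hv hvS => (hf u hu).2 v hv (Finset.mem_insert_of_mem hvS))
      (fun v hv hvS => (hg _ (hσ u' hu').1).2 v hv (Finset.mem_insert_of_mem hvS)) hz₁ hz₂
    rw [← hzu, hzσ, (hσ u' hu').2 (hzσ ▸ hzS)]
  have hjoin (u) (hu : u ∈ insert x S) :
      ∃ l, IsWalk (insert (x, y) E) A B l ∧ l ⊆ f u ++ [u] ++ σ u :: g (σ u) := by
    refine ((hf u hu).1.mono (Set.subset_insert _ _) subset_rfl subset_rfl).append_of_link
      ((hg _ (hσ u hu).1).1.mono (Set.subset_insert _ _) subset_rfl subset_rfl) ?_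
    rcases Finset.mem_insert.1 hu with rfl | hu
    · simp [σ]
    · simp [hσS u hu]
  choose! P hP hPsub using hjoin
  refine ⟨P, hP, fun u hu u' hu' hne => ?_⟩
  refine List.disjoint_of_subset_left (hPsub _ hu) (List.disjoint_of_subset_right (hPsub _ hu') ?_)
  intro z hz₁ hz₂
  rcases List.mem_append.1 hz₁ with h₁ | h₁ <;> rcases List.mem_append.1 hz₂ with h₂ | h₂
  · exact hfd hu hu' hne h₁ h₂
  · exact hne (hmix _ hu _ hu' z h₁ h₂)
  · exact hne (hmix _ hu' _ hu z h₂ h₁).symm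
  · exact hgd (hσ _ hu).1 (hσ _ hu').1 (σ.injective.ne hne) h₁ h₂

/-- Göring's step: if deleting `(x, y)` leaves an `A`–`B` separator `S` with fewer than `k`
vertices, then `S ∪ {x}` and `S ∪ {y}` are separators of size `k`, and the `k` disjoint walks from
`A` to `S ∪ {x}` and from `S ∪ {y}` to `B` can be joined. -/
theorem exists_walks_insert_edge {S : Finset W}
    (ih : ∀ A' B' : Set W, (∀ T, Separates E A' B' T → k ≤ T.card) →
      ∃ P : Fin k → List W, (∀ i, IsWalk E A' B' (P i)) ∧
        Pairwise fun i j => (P i).Disjoint (P j))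
    (hsep : ∀ T, Separates (insert (x, y) E) A B T → k ≤ T.card)
    (hS : Separates E A B S) (hSk : S.card < k) :
    ∃ P : Fin k → List W, (∀ i, IsWalk (insert (x, y) E) A B (P i)) ∧
      Pairwise fun i j => (P i).Disjoint (P j) := by
  have hX (T : Finset W) (hT : Separates E A ↑(insert x S) T) : k ≤ T.card :=
    hsep T (hS.insert_edge_of_insert_target hT)
  have hY (T : Finset W) (hT : Separates E ↑(insert y S) B T) : k ≤ T.card :=
    hsep T (hS.insert_edge_of_insert_source hT)
  have hXk : (insert x S).card = k :=
    ((Finset.card_insert_le _ _).trans hSk).antisymm (hX _ (separates_target _))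
  have hYk : (insert y S).card = k :=
    ((Finset.card_insert_le _ _).trans hSk).antisymm (hY _ (separates_swap.1 (separates_target _)))
  have hxS : x ∉ S := fun h => by rw [Finset.insert_eq_of_mem h] at hXk; omega
  have hyS : y ∉ S := fun h => by rw [Finset.insert_eq_of_mem h] at hYk; omega
  obtain ⟨P, hP, hPd⟩ := ih A _ hX
  obtain ⟨Q, hQ, hQd⟩ := ih _ B hY
  obtain ⟨f, hf, hfd⟩ := exists_walks_to_each_of_card_le hXk.le hP hPd
  obtain ⟨g, hg, hgd⟩ := exists_walks_from_each_of_card_le hYk.le hQ hQd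
  obtain ⟨R, hR, hRd⟩ := exists_walks_join hS hxS hyS hf hfd hg hgd
  obtain ⟨e, he, heX⟩ := Finset.exists_injective_fin_mem hXk.ge
  exact ⟨R ∘ e, fun i => hR _ (heX i), fun i j hij => hRd (heX i) (heX j) (he.ne hij)⟩

theorem exists_disjoint_walks_of_empty (h : ∀ S, Separates ∅ A B S → k ≤ S.card) :
    ∃ P : Fin k → List W, (∀ i, IsWalk ∅ A B (P i)) ∧
      Pairwise fun i j => (P i).Disjoint (P j) := by
  obtain ⟨T, hTAB, hT⟩ : ∃ T : Finset W, ↑T ⊆ A ∩ B ∧ k ≤ T.card := by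
    rcases (A ∩ B).finite_or_infinite with hfin | hinf
    · refine ⟨hfin.toFinset, by simp, h _ fun l hl => ?_⟩
      obtain ⟨v, hv, rfl⟩ := hl.exists_eq_singleton_of_empty
      exact ⟨v, hfin.mem_toFinset.2 hv, List.mem_singleton_self v⟩
    · obtain ⟨T, hT, hTk⟩ := hinf.exists_subset_card_eq k
      exact ⟨T, hT, hTk.ge⟩
  obtain ⟨e, he, heT⟩ := Finset.exists_injective_fin_mem hT
  refine ⟨fun i => [e i], fun i => ⟨List.isChain_singleton _, ⟨e i, (hTAB (heT i)).1, rfl⟩,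
    e i, (hTAB (heT i)).2, rfl⟩, fun i j hij => ?_⟩
  simpa using he.ne hij.symm

theorem exists_disjoint_walks_of_finite (hE : E.Finite) :
    ∀ {A B : Set W}, (∀ S, Separates E A B S → k ≤ S.card) →
      ∃ P : Fin k → List W, (∀ i, IsWalk E A B (P i)) ∧
        Pairwise fun i j => (P i).Disjoint (P j) := by
  induction E, hE using Set.Finite.induction_on with
  | empty => exact exists_disjoint_walks_of_empty
  | @insert e E _ _ ih =>
    intro A B hsep
    by_cases hE : ∃ S, Separates E A B S ∧ S.card < k
    · obtain ⟨S, hS, hSk⟩ := hE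
      exact exists_walks_insert_edge (fun _ _ => ih) hsep hS hSk
    · obtain ⟨P, hP, hPd⟩ := ih fun S hS => not_lt.1 fun hSk => hE ⟨S, hS, hSk⟩
      exact ⟨P, fun i => (hP i).mono (Set.subset_insert _ _) subset_rfl subset_rfl, hPd⟩

theorem exists_disjoint_walks (h : ∀ S, Separates E A B S → k ≤ S.card) :
    ∃ P : Fin k → List W, (∀ i, IsWalk E A B (P i)) ∧
      Pairwise fun i j => (P i).Disjoint (P j) := by
  obtain ⟨I, hIw, hI⟩ := exists_finset_forall_card_lt_exists_disjoint List.toFinset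
    (p := IsWalk E A B) (m := k) fun S hS => by
      by_contra! hno
      refine absurd (h S fun l hl => ?_) hS.not_ge
      obtain ⟨v, hvS, hvl⟩ := Finset.not_disjoint_iff.1 (hno l hl)
      exact ⟨v, hvS, List.mem_toFinset.1 hvl⟩
  set F : Set (W × W) := {e ∈ E | ∃ l ∈ I, e.1 ∈ l ∧ e.2 ∈ l}
  have hF : F.Finite := (I.biUnion fun l => l.toFinset ×ˢ l.toFinset).finite_toSet.subset
    fun e ⟨_, l, hl, h₁, h₂⟩ => Finset.mem_coe.2 <| Finset.mem_biUnion.2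
      ⟨l, hl, Finset.mem_product.2 ⟨List.mem_toFinset.2 h₁, List.mem_toFinset.2 h₂⟩⟩
  have hIF (l) (hl : l ∈ I) : IsWalk F A B l :=
    ⟨(List.IsChain.iff_mem.1 (hIw l hl).1).imp fun _ _ ⟨h₁, h₂, h⟩ => ⟨h, l, hl, h₁, h₂⟩,
      (hIw l hl).2⟩
  obtain ⟨P, hP, hPd⟩ := exists_disjoint_walks_of_finite hF fun S hS => by
    by_contra! hSk
    obtain ⟨l, hl, hdisj⟩ := hI S hSk
    obtain ⟨v, hvS, hvl⟩ := hS l (hIF l hl)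
    exact Finset.disjoint_left.1 hdisj hvS (List.mem_toFinset.2 hvl)
  exact ⟨P, fun i => (hP i).mono (Set.sep_subset _ _) subset_rfl subset_rfl, hPd⟩

end Menger

namespace MixedGraph

/-- The walks from `inl a` to `inr b` along these edges are the treks from `a` to `b`: up the
left side in the left copy (arrows reversed), across the top, then down the right side in the
right copy. -/
def trekEdges (G : MixedGraph V) : Set ((V ⊕ V) × (V ⊕ V))
  | (.inl u, .inl v) => G.dir v u
  | (.inl u, .inr v) => u = v ∨ G.bi u v
  | (.inr u, .inr v) => G.dir u v
  | (.inr _, .inl _) => False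

variable {G : MixedGraph V} {l : List (V ⊕ V)}

theorem exists_eq_map_inl_append_map_inr (h : l.IsChain fun a b => (a, b) ∈ G.trekEdges) :
    ∃ l₁ l₂ : List V, l = l₁.map .inl ++ l₂.map .inr := by
  induction l with
  | nil => exact ⟨[], [], rfl⟩
  | cons a l ih =>
    obtain ⟨l₁, l₂, rfl⟩ := ih h.tail
    rcases a with u | u
    · exact ⟨u :: l₁, l₂, rfl⟩
    · rcases l₁ with _ | ⟨v, l₁⟩
      · exact ⟨[], u :: l₂, rfl⟩
      · exact (List.isChain_cons_cons.1 h).1.elim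

end MixedGraph

namespace Trek

variable {G : MixedGraph V} {A B : Set V} {l : List (V ⊕ V)}

def toWalk (t : Trek G) : List (V ⊕ V) := t.left.reverse.map .inl ++ t.right.map .inr

@[simp] theorem inl_mem_toWalk (t : Trek G) (v : V) : .inl v ∈ t.toWalk ↔ t.onLeft v := by
  simp [toWalk, onLeft]

@[simp] theorem inr_mem_toWalk (t : Trek G) (v : V) : .inr v ∈ t.toWalk ↔ t.onRight v := by
  simp [toWalk, onRight]

theorem isWalk_toWalk (t : Trek G) (hA : t.src ∈ A) (hB : t.dst ∈ B) :
    Menger.IsWalk G.trekEdges (.inl '' A) (.inr '' B) t.toWalk := by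
  refine ⟨List.IsChain.append ?_ ?_ ?_, ⟨.inl t.src, ⟨_, hA, rfl⟩, ?_⟩,
    .inr t.dst, ⟨_, hB, rfl⟩, ?_⟩
  · exact (List.isChain_map _).2 (List.isChain_reverse.2 t.left_chain)
  · exact (List.isChain_map _).2 t.right_chain
  · intro a ha b hb
    simp only [List.getLast?_map, List.getLast?_reverse, List.head?_map,
      List.head?_eq_some_head t.left_ne, List.head?_eq_some_head t.right_ne, Option.map_some,
      Option.mem_def, Option.some.injEq] at ha hb
    subst ha hb
    exact t.top_ok
  · rw [toWalk, List.head?_append_of_ne_nil _ (by simpa using t.left_ne)]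
    simp [src, List.getLast?_eq_some_getLast t.left_ne]
  · rw [toWalk, List.getLast?_append_of_ne_nil _ (by simpa using t.right_ne)]
    simp [dst, List.getLast?_eq_some_getLast t.right_ne]

theorem sameSided_of_src_eq {t₁ t₂ : Trek G} (h : t₁.src = t₂.src) : t₁.SameSided t₂ :=
  ⟨t₁.src, .inl ⟨List.getLast_mem _, h ▸ List.getLast_mem _⟩⟩

theorem sameSided_of_dst_eq {t₁ t₂ : Trek G} (h : t₁.dst = t₂.dst) : t₁.SameSided t₂ :=
  ⟨t₁.dst, .inr ⟨List.getLast_mem _, h ▸ List.getLast_mem _⟩⟩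

theorem exists_of_isWalk (h : Menger.IsWalk G.trekEdges (.inl '' A) (.inr '' B) l) :
    ∃ t : Trek G, t.src ∈ A ∧ t.dst ∈ B ∧
      (∀ v, t.onLeft v → .inl v ∈ l) ∧ ∀ v, t.onRight v → .inr v ∈ l := by
  obtain ⟨hc, ⟨_, ⟨a, ha, rfl⟩, hla⟩, ⟨_, ⟨b, hb, rfl⟩, hlb⟩⟩ := h
  obtain ⟨l₁, l₂, rfl⟩ := MixedGraph.exists_eq_map_inl_append_map_inr hc
  have h₁ : l₁ ≠ [] := by rintro rfl; cases l₂ <;> simp at hla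
  have h₂ : l₂ ≠ [] := by rintro rfl; simp at hlb
  rw [List.head?_append_of_ne_nil _ (by simpa using h₁), List.head?_map,
    List.head?_eq_some_head h₁] at hla
  rw [List.getLast?_append_of_ne_nil _ (by simpa using h₂), List.getLast?_map,
    List.getLast?_eq_some_getLast h₂] at hlb
  have htop := hc.rel_getLast_head_of_append (by simpa using h₁) (by simpa using h₂)
  simp only [List.getLast_map, List.head_map] at htop
  refine ⟨⟨l₁.reverse, l₂, by simpa using h₁, h₂,
    List.isChain_reverse.2 ((List.isChain_map Sum.inl).1 hc.left_of_append),
    (List.isChain_map Sum.inr).1 hc.right_of_append, by rw [List.head_reverse]; exact htop⟩,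
    ?_, ?_, fun v hv => by simpa [onLeft] using hv, fun v hv => by simpa [onRight] using hv⟩
  · simp_all [src, List.getLast_reverse]
  · simp_all [dst]

end Trek

theorem tSep_of_separates {G : MixedGraph V} {A B : Set V} {S : Finset (V ⊕ V)}
    (h : Menger.Separates G.trekEdges (.inl '' A) (.inr '' B) S) :
    TSep G S.toLeft S.toRight A B := fun t hA hB => by
  obtain ⟨v | v, hvS, hv⟩ := h _ (t.isWalk_toWalk hA hB)
  · exact .inl ⟨v, Finset.mem_toLeft.2 hvS, (t.inl_mem_toWalk v).1 hv⟩
  · exact .inr ⟨v, Finset.mem_toRight.2 hvS, (t.inr_mem_toWalk v).1 hv⟩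

theorem treks_exist_of_min_separator_size_general
    {V : Type} (G : MixedGraph V) (A B : Set V)
    (k : ℕ)
    (hsep : ∀ L R : Finset V, TSep G L R A B → k ≤ L.card + R.card) :
    ∃ π : Fin k → Trek G,
      (∀ a : Fin k, (π a).src ∈ A ∧ (π a).dst ∈ B) ∧
      (∀ a b : Fin k, a ≠ b → ¬ Trek.SameSided (π a) (π b)) ∧
      Function.Injective (fun a : Fin k => (π a).src) ∧
      Function.Injective (fun a : Fin k => (π a).dst) := by
  obtain ⟨P, hP, hdisj⟩ := Menger.exists_disjoint_walks (E := G.trekEdges) (A := .inl '' A)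
    (B := .inr '' B) fun S hS =>
      (hsep _ _ (tSep_of_separates hS)).trans Finset.card_toLeft_add_card_toRight.le
  choose π hsrc hdst hleft hright using fun i => Trek.exists_of_isWalk (hP i)
  have hside (a b : Fin k) (hab : a ≠ b) : ¬ (π a).SameSided (π b) := by
    rintro ⟨v, ⟨ha, hb⟩ | ⟨ha, hb⟩⟩
    exacts [hdisj hab (hleft a v ha) (hleft b v hb), hdisj hab (hright a v ha) (hright b v hb)]
  refine ⟨π, fun a => ⟨hsrc a, hdst a⟩, hside, fun a b h => ?_, fun a b h => ?_⟩
  · by_contra hab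
    exact hside a b hab (Trek.sameSided_of_src_eq h)
  · by_contra hab
    exact hside a b hab (Trek.sameSided_of_dst_eq h)

/-- Menger-type statement for treks.  If every t-separator of
`A` and `B` has size at least `k`, then there are `k` treks from `A` to `B`,
no two of which have a same-sided intersection (in particular their left
endpoints are `k` distinct vertices of `A` and their right endpoints are `k`
distinct vertices of `B`). -/
theorem treks_exist_of_min_separator_size
    {V : Type} (G : MixedGraph V) (hG : G.Acyclic) (A B : Set V)
    (k : ℕ) (hk : 1 ≤ k)
    (hsep : ∀ L R : Finset V, TSep G L R A B → k ≤ L.card + R.card) :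
    ∃ π : Fin k → Trek G,
      (∀ a : Fin k, (π a).src ∈ A ∧ (π a).dst ∈ B) ∧
      (∀ a b : Fin k, a ≠ b → ¬ Trek.SameSided (π a) (π b)) ∧
      Function.Injective (fun a : Fin k => (π a).src) ∧
      Function.Injective (fun a : Fin k => (π a).dst) :=
  treks_exist_of_min_separator_size_general G A B k hsep
end
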